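/- arXiv:2210.06130 — 3 statements merged into one kernel-verified Lean document; each statement's English description precedes it below -/
import Mathlib

section
/- Let λ > 0, α > 0, let L : (0,∞) → (0,∞) be slowly varying at ∞, and let g : (0,∞) → (0,∞) be a non-increasing function such that g(x)/(x^{-α} L(x)) → 1 as x → ∞. For t ≥ 0 define h_t := inf { x > 0 : g(x) ≤ e^{-λ t} }. Then t ↦ h_t is non-decreasing, h_t → ∞ as t → ∞, and lim_{t→∞} e^{λ t} h_t^{-α} L(h_t) = 1 (equivalently, lim_{t→∞} e^{λ t} g(h_t) = 1). -/
open Filter Set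

lemma ratio_lim (α : ℝ) (L g : ℝ → ℝ)
    (hLpos : ∀ x > (0:ℝ), 0 < L x)
    (hLsv : ∀ c > (0:ℝ), Tendsto (fun x => L (c * x) / L x) atTop (nhds 1))
    (hgpos : ∀ x > (0:ℝ), 0 < g x)
    (hgasym : Tendsto (fun x => g x / (x ^ (-α) * L x)) atTop (nhds 1))
    (c : ℝ) (hc : 0 < c) :
    Tendsto (fun x => g (c * x) / g x) atTop (nhds (c ^ (-α))) := by
  have hmulTop : Tendsto (fun x : ℝ => c * x) atTop atTop := by
    exact Tendsto.const_mul_atTop hc tendsto_id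
  have hcomp : Tendsto (fun x => g (c*x) / ((c*x) ^ (-α) * L (c*x))) atTop (nhds 1) :=
    hgasym.comp hmulTop
  have hinv : Tendsto (fun x => (x ^ (-α) * L x) / g x) atTop (nhds 1) := by
    have := hgasym.inv₀ one_ne_zero
    simpa [inv_div] using this
  have hmid : Tendsto (fun x => c ^ (-α) * (L (c*x) / L x)) atTop (nhds (c ^ (-α))) := by
    simpa using (tendsto_const_nhds.mul (hLsv c hc))
  have hprod := (hcomp.mul hmid).mul hinv
  have hlim : (1 * c ^ (-α)) * 1 = c ^ (-α) := by ring
  rw [hlim] at hprod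
  refine Tendsto.congr' ?_ hprod
  filter_upwards [eventually_gt_atTop (0:ℝ)] with x hx
  have hx' : 0 < c * x := mul_pos hc hx
  have hL1 := hLpos x hx
  have hL2 := hLpos _ hx'
  have hg1 := hgpos x hx
  have hp1 : (0:ℝ) < x ^ (-α) := Real.rpow_pos_of_pos hx _
  have hp2 : (0:ℝ) < (c*x) ^ (-α) := Real.rpow_pos_of_pos hx' _
  have hcx : (c*x) ^ (-α) = c ^ (-α) * x ^ (-α) := Real.mul_rpow hc.le hx.le
  rw [hcx]
  field_simp

lemma exists_small (α : ℝ) (hα : 0 < α) (L g : ℝ → ℝ)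
    (hLpos : ∀ x > (0:ℝ), 0 < L x)
    (hLsv : ∀ c > (0:ℝ), Tendsto (fun x => L (c * x) / L x) atTop (nhds 1))
    (hgpos : ∀ x > (0:ℝ), 0 < g x)
    (hgmono : ∀ x y : ℝ, 0 < x → x ≤ y → g y ≤ g x)
    (hgasym : Tendsto (fun x => g x / (x ^ (-α) * L x)) atTop (nhds 1)) :
    ∀ ε > (0:ℝ), ∃ x, 0 < x ∧ g x < ε := by
  intro ε hε
  have h2 := ratio_lim α L g hLpos hLsv hgpos hgasym 2 two_pos
  have h2a : (2:ℝ) ^ (-α) < 1 :=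
    Real.rpow_lt_one_of_one_lt_of_neg one_lt_two (by linarith)
  have h2p : (0:ℝ) < (2:ℝ) ^ (-α) := Real.rpow_pos_of_pos two_pos _
  set r : ℝ := ((2:ℝ) ^ (-α) + 1) / 2 with hrdef
  have hr0 : 0 < r := by positivity
  have hr1 : r < 1 := by rw [hrdef]; linarith
  have hlt : (2:ℝ) ^ (-α) < r := by rw [hrdef]; linarith
  obtain ⟨X, hX⟩ := (eventually_atTop).1 (h2.eventually (eventually_lt_nhds hlt))
  set X' : ℝ := max X 1 with hX'def
  have hX'1 : (1:ℝ) ≤ X' := le_max_right _ _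
  have hX'0 : (0:ℝ) < X' := lt_of_lt_of_le one_pos hX'1
  have key : ∀ n : ℕ, g (2^n * X') ≤ r^n * g X' := by
    intro n
    induction n with
    | zero => simp
    | succ n ih =>
      have hge : X ≤ 2^n * X' := by
        calc X ≤ X' := le_max_left _ _
        _ ≤ 2^n * X' := le_mul_of_one_le_left hX'0.le (one_le_pow₀ one_le_two)
      have hpos : 0 < 2^n * X' := by positivity
      have hratio := hX _ hge
      have hgpos' := hgpos _ hpos
      have hstep : g (2 * (2^n * X')) < r * g (2^n * X') := by
        rw [div_lt_iff₀ hgpos'] at hratio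
        exact hratio
      have heq : (2:ℝ)^(n+1) * X' = 2 * (2^n * X') := by ring
      rw [heq]
      calc g (2 * (2^n * X')) ≤ r * g (2^n * X') := hstep.le
        _ ≤ r * (r^n * g X') := by
            exact mul_le_mul_of_nonneg_left ih hr0.le
        _ = r^(n+1) * g X' := by ring
  have htend : Tendsto (fun n : ℕ => r^n * g X') atTop (nhds 0) := by
    have := tendsto_pow_atTop_nhds_zero_of_lt_one hr0.le hr1
    simpa using this.mul_const (g X')
  obtain ⟨n, hn⟩ := (htend.eventually (eventually_lt_nhds hε)).exists
  refine ⟨2^n * X', by positivity, lt_of_le_of_lt (key n) hn⟩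

/-- existence and asymptotics of the normalizing function `h_t`. -/
theorem stmt_0 (lam α : ℝ) (hlam : 0 < lam) (hα : 0 < α)
    (L g : ℝ → ℝ)
    (hLpos : ∀ x > (0:ℝ), 0 < L x)
    (hLsv : ∀ c > (0:ℝ), Tendsto (fun x => L (c * x) / L x) atTop (nhds 1))
    (hgpos : ∀ x > (0:ℝ), 0 < g x)
    (hgmono : ∀ x y : ℝ, 0 < x → x ≤ y → g y ≤ g x)
    (hgasym : Tendsto (fun x => g x / (x ^ (-α) * L x)) atTop (nhds 1))
    (h : ℝ → ℝ)
    (hdef : ∀ t ≥ (0:ℝ), h t = sInf {x : ℝ | 0 < x ∧ g x ≤ Real.exp (-(lam * t))}) :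
    (∀ s t : ℝ, 0 ≤ s → s ≤ t → h s ≤ h t) ∧
    Tendsto h atTop atTop ∧
    Tendsto (fun t => Real.exp (lam * t) * ((h t) ^ (-α) * L (h t))) atTop (nhds 1) ∧
    Tendsto (fun t => Real.exp (lam * t) * g (h t)) atTop (nhds 1) := by
  have hS_ne : ∀ t : ℝ, ({x : ℝ | 0 < x ∧ g x ≤ Real.exp (-(lam * t))}).Nonempty := by
    intro t
    obtain ⟨x, hx0, hxg⟩ := exists_small α hα L g hLpos hLsv hgpos hgmono hgasym
      (Real.exp (-(lam * t))) (Real.exp_pos _)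
    exact ⟨x, hx0, hxg.le⟩
  have hbdd : ∀ t : ℝ, BddBelow {x : ℝ | 0 < x ∧ g x ≤ Real.exp (-(lam * t))} :=
    fun t => ⟨0, fun x hx => hx.1.le⟩
  -- Part 1: monotonicity
  have part1 : ∀ s t : ℝ, 0 ≤ s → s ≤ t → h s ≤ h t := by
    intro s t hs hst
    rw [hdef s hs, hdef t (hs.trans hst)]
    refine csInf_le_csInf (hbdd s) (hS_ne t) ?_
    intro x hx
    refine ⟨hx.1, hx.2.trans (Real.exp_le_exp.2 ?_)⟩
    nlinarith
  -- Part 2: h tends to infinity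
  have hexp0 : Tendsto (fun t : ℝ => Real.exp (-(lam * t))) atTop (nhds 0) := by
    apply Real.tendsto_exp_atBot.comp
    exact tendsto_neg_atTop_atBot.comp (Tendsto.const_mul_atTop hlam tendsto_id)
  have h_top : Tendsto h atTop atTop := by
    rw [tendsto_atTop]
    intro M
    set M' : ℝ := max M 1 with hM'def
    have hM'0 : 0 < M' := lt_of_lt_of_le one_pos (le_max_right _ _)
    have hgM' := hgpos M' hM'0
    filter_upwards [hexp0.eventually (eventually_lt_nhds hgM'), eventually_ge_atTop (0:ℝ)]
      with t h1 h2
    rw [hdef t h2]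
    refine le_trans (le_max_left M 1) (le_csInf (hS_ne t) ?_)
    intro x hx
    by_contra hcon
    push_neg at hcon
    have := hgmono x M' hx.1 hcon.le
    have := hx.2
    linarith
  -- structural facts about h t
  have hstruct_hi : ∀ t ≥ (0:ℝ), ∀ x, h t < x → g x ≤ Real.exp (-(lam * t)) := by
    intro t ht x hx
    rw [hdef t ht] at hx
    obtain ⟨y, hy, hyx⟩ := exists_lt_of_csInf_lt (hS_ne t) hx
    exact (hgmono y x hy.1 hyx.le).trans hy.2
  have hstruct_lo : ∀ t ≥ (0:ℝ), ∀ x, 0 < x → x < h t → Real.exp (-(lam * t)) < g x := by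
    intro t ht x hx0 hx
    by_contra hcon
    push_neg at hcon
    have : h t ≤ x := by
      rw [hdef t ht]; exact csInf_le (hbdd t) ⟨hx0, hcon⟩
    linarith
  have hexpmul : ∀ t : ℝ, Real.exp (lam * t) * Real.exp (-(lam * t)) = 1 := by
    intro t; rw [← Real.exp_add]; simp
  -- Part 4: main limit
  have part4 : Tendsto (fun t => Real.exp (lam * t) * g (h t)) atTop (nhds 1) := by
    rw [tendsto_order]
    constructor
    · intro a ha
      obtain ⟨c, hc1, hca⟩ : ∃ c : ℝ, 1 < c ∧ a < c ^ (-α) := by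
        have hcont : ContinuousAt (fun c : ℝ => c ^ (-α)) 1 :=
          Real.continuousAt_rpow_const 1 (-α) (Or.inl one_ne_zero)
        have htend : Tendsto (fun c : ℝ => c ^ (-α)) (nhdsWithin 1 (Ioi 1)) (nhds 1) := by
          have := hcont.tendsto.mono_left (nhdsWithin_le_nhds (s := Ioi (1:ℝ)))
          simpa [Real.one_rpow] using this
        have hev := (htend.eventually (eventually_gt_nhds ha)).and self_mem_nhdsWithin
        obtain ⟨c, hc, hcmem⟩ := hev.exists
        exact ⟨c, hcmem, hc⟩
      have hc0 : (0:ℝ) < c := lt_trans one_pos hc1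
      have hdiv : Tendsto (fun t => h t / c) atTop atTop := h_top.atTop_div_const hc0
      have hG : Tendsto (fun t => g (c * (h t / c)) / g (h t / c)) atTop (nhds (c ^ (-α))) :=
        (ratio_lim α L g hLpos hLsv hgpos hgasym c hc0).comp hdiv
      have hG' : Tendsto (fun t => g (h t) / g (h t / c)) atTop (nhds (c ^ (-α))) := by
        refine hG.congr (fun t => ?_)
        have : c * (h t / c) = h t := by field_simp
        rw [this]
      filter_upwards [hG'.eventually (eventually_gt_nhds hca),
        h_top.eventually_ge_atTop 1, eventually_ge_atTop (0:ℝ)] with t hGt hht ht0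
      have hht0 : 0 < h t := lt_of_lt_of_le one_pos hht
      have hx0 : 0 < h t / c := div_pos hht0 hc0
      have hxlt : h t / c < h t := div_lt_self hht0 hc1
      have hlow := hstruct_lo t ht0 _ hx0 hxlt
      have hgx := hgpos _ hx0
      have hght := hgpos _ hht0
      have h1 : 1 ≤ Real.exp (lam * t) * g (h t / c) := by
        nlinarith [Real.exp_pos (lam * t), hexpmul t]
      have key : g (h t) / g (h t / c) ≤ Real.exp (lam * t) * g (h t) := by
        rw [div_le_iff₀ hgx]
        calc g (h t) = g (h t) * 1 := by ring
          _ ≤ g (h t) * (Real.exp (lam * t) * g (h t / c)) :=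
              mul_le_mul_of_nonneg_left h1 hght.le
          _ = Real.exp (lam * t) * g (h t) * g (h t / c) := by ring
      exact lt_of_lt_of_le hGt key
    · intro b hb
      obtain ⟨c, hc1, hcb⟩ : ∃ c : ℝ, 1 < c ∧ c ^ α < b := by
        have hcont : ContinuousAt (fun c : ℝ => c ^ α) 1 :=
          Real.continuousAt_rpow_const 1 α (Or.inl one_ne_zero)
        have htend : Tendsto (fun c : ℝ => c ^ α) (nhdsWithin 1 (Ioi 1)) (nhds 1) := by
          have := hcont.tendsto.mono_left (nhdsWithin_le_nhds (s := Ioi (1:ℝ)))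
          simpa [Real.one_rpow] using this
        have hev := (htend.eventually (eventually_lt_nhds hb)).and self_mem_nhdsWithin
        obtain ⟨c, hc, hcmem⟩ := hev.exists
        exact ⟨c, hcmem, hc⟩
      have hc0 : (0:ℝ) < c := lt_trans one_pos hc1
      have hH : Tendsto (fun t => g (c * h t) / g (h t)) atTop (nhds (c ^ (-α))) :=
        (ratio_lim α L g hLpos hLsv hgpos hgasym c hc0).comp h_top
      have hH' : Tendsto (fun t => g (h t) / g (c * h t)) atTop (nhds (c ^ α)) := by
        have := hH.inv₀ (ne_of_gt (Real.rpow_pos_of_pos hc0 _))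
        simpa [inv_div, Real.rpow_neg hc0.le] using this
      filter_upwards [hH'.eventually (eventually_lt_nhds hcb),
        h_top.eventually_ge_atTop 1, eventually_ge_atTop (0:ℝ)] with t hHt hht ht0
      have hht0 : 0 < h t := lt_of_lt_of_le one_pos hht
      have hchi : h t < c * h t := lt_mul_of_one_lt_left hht0 hc1
      have hhi := hstruct_hi t ht0 _ hchi
      have hgc := hgpos _ (mul_pos hc0 hht0)
      have hght := hgpos _ hht0
      have h1 : Real.exp (lam * t) * g (c * h t) ≤ 1 := by
        nlinarith [Real.exp_pos (lam * t), hexpmul t]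
      have key : Real.exp (lam * t) * g (h t) ≤ g (h t) / g (c * h t) := by
        rw [le_div_iff₀ hgc]
        calc Real.exp (lam * t) * g (h t) * g (c * h t)
            = (Real.exp (lam * t) * g (c * h t)) * g (h t) := by ring
          _ ≤ 1 * g (h t) := mul_le_mul_of_nonneg_right h1 hght.le
          _ = g (h t) := by ring
      exact lt_of_le_of_lt key hHt
  -- Part 3 from part 4
  have hinv1 : Tendsto (fun x => (x ^ (-α) * L x) / g x) atTop (nhds 1) := by
    have := hgasym.inv₀ one_ne_zero
    simpa [inv_div] using this
  have part3 : Tendsto (fun t => Real.exp (lam * t) * ((h t) ^ (-α) * L (h t))) atTop (nhds 1) := by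
    have hprod := part4.mul (hinv1.comp h_top)
    rw [mul_one] at hprod
    refine Tendsto.congr' ?_ hprod
    filter_upwards [h_top.eventually_ge_atTop 1] with t hht
    have hht0 : 0 < h t := lt_of_lt_of_le one_pos hht
    have hght := hgpos _ hht0
    show Real.exp (lam * t) * g (h t) * (((h t) ^ (-α) * L (h t)) / g (h t))
        = Real.exp (lam * t) * ((h t) ^ (-α) * L (h t))
    field_simp
  exact ⟨part1, h_top, part3, part4⟩
end

section
/- Let α ∈ (0,2), let L : (0,∞) → (0,∞) be slowly varying at ∞, and let ψ : ℝ → ℂ satisfy: ψ(−θ) is the complex conjugate of ψ(θ); Re(ψ(θ)) ≤ 0 for all θ; and there is a constant c₁ > 0 such that ‖ψ(θ)‖ ≤ c₁ |θ|^{α} L(|θ|^{-1}) whenever 0 < |θ| ≤ 1. Suppose that for each s > 0, μ_s is a Borel probability measure on ℝ whose characteristic function equals θ ↦ exp(s ψ(θ)). Then there exist constants c₀ > 0 and x₀ > 0 such that for all s > 0 and all x > x₀, μ_s({ y ∈ ℝ : |y| > x }) ≤ c₀ s x^{-α} L(x). -/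
/-!
Put `N t = 1 - Re φ(t)` with `φ = exp (s ψ)` the characteristic function of `μ_s`. The classical
truncation inequality bounds `μ_s {|y| > x}` by the supremum of `N` on `[-2/x, 2/x]`, and
`N t ≤ 2 s ‖ψ t‖ ≤ 2 s c₁ t^α L(1/t)`. Slow variation only gives `L(b y) ≤ 2 L(y)` for one fixed
base `b` and large `y`, so `N` is controlled directly only at the points `u / b^i`, `u = 2/x`, where
it decays like `(2 / b^α)^i`. Since `1 - cos` is quasi-subadditive, `N (p + q) ≤ 2 N p + 2 N q`,
expanding `θ ∈ [0, u]` in base `b` (with `b^α ≥ 8`) bounds `N θ` by a convergent geometric series;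
the remainder of the expansion is negligible because `N` is continuous.
-/

open Filter Set MeasureTheory Topology

lemma Real.one_sub_cos_add_le (a b : ℝ) :
    1 - cos (a + b) ≤ 2 * (1 - cos a) + 2 * (1 - cos b) := by
  nlinarith [sin_sq_add_cos_sq a, sin_sq_add_cos_sq b, cos_add a b,
    sq_nonneg (sin a - sin b), sq_nonneg (cos a + cos b - 2)]

lemma Complex.one_sub_re_exp_le {z : ℂ} (hz : z.re ≤ 0) : 1 - (exp z).re ≤ 2 * ‖z‖ := by
  rcases le_or_gt ‖z‖ 1 with hz1 | hz1
  · calc 1 - (exp z).re = (-(exp z - 1)).re := by simp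
      _ ≤ ‖exp z - 1‖ := (re_le_norm _).trans (norm_neg _).le
      _ ≤ 2 * ‖z‖ := norm_exp_sub_one_le hz1
  · have hexp : ‖exp z‖ ≤ 1 := by rw [norm_exp]; exact Real.exp_le_one_iff.mpr hz
    linarith [neg_le_of_abs_le ((abs_re_le_norm (exp z)).trans hexp)]

lemma exists_digits_sub_sum_mem_Icc {b : ℕ} (hb : 2 ≤ b) {u θ : ℝ} (hu : 0 < u)
    (hθ : θ ∈ Icc 0 u) :
    ∃ d : ℕ → ℕ, (∀ i, d i < b) ∧
      ∀ n, θ - ∑ i ∈ Finset.range (n + 1), d i * (u / b ^ i) ∈ Icc 0 (u / b ^ n) := by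
  have hbpos : (0 : ℝ) < b := by positivity
  set k : ℕ → ℕ := fun n => ⌊θ * b ^ n / u⌋₊ with hk
  have hk_succ (n : ℕ) : k n = k (n + 1) / b := by
    rw [hk, ← Nat.floor_div_natCast, pow_succ]
    field_simp
  have hk0 : k 0 < b := by
    have : k 0 ≤ 1 := Nat.floor_le_one_of_le_one (by simpa [div_le_one hu] using hθ.2)
    omega
  refine ⟨fun i => k i % b, fun i => Nat.mod_lt _ (by omega), fun n => ?_⟩
  have hsum : ∑ i ∈ Finset.range (n + 1), ((k i % b : ℕ) : ℝ) * (u / b ^ i) =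
      k n * (u / b ^ n) := by
    induction n with
    | zero => simp [Nat.mod_eq_of_lt hk0]
    | succ n ih =>
      rw [Finset.sum_range_succ, ih, hk_succ n]
      have hdiv : (k (n + 1) : ℝ) = b * (k (n + 1) / b : ℕ) + (k (n + 1) % b : ℕ) := by
        exact_mod_cast (Nat.div_add_mod (k (n + 1)) b).symm
      rw [hdiv]
      field_simp
      ring
  rw [hsum]
  have hθb : 0 ≤ θ * b ^ n / u := by have := hθ.1; positivity
  have h1 : (k n : ℝ) ≤ θ * b ^ n / u := Nat.floor_le hθb
  have h2 : θ * b ^ n / u < k n + 1 := Nat.lt_floor_add_one _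
  have hbn : (0 : ℝ) < b ^ n := by positivity
  rw [le_div_iff₀ hu] at h1
  rw [div_lt_iff₀ hu] at h2
  rw [mul_div_assoc', mem_Icc, sub_nonneg, div_le_iff₀ hbn, sub_le_iff_le_add, ← add_div,
    le_div_iff₀ hbn]
  constructor <;> linarith

def QuasiSubadditive (N : ℝ → ℝ) : Prop := ∀ p q, N (p + q) ≤ 2 * N p + 2 * N q

namespace QuasiSubadditive

variable {N : ℝ → ℝ}

lemma apply_sum_le (hN : QuasiSubadditive N) (h0 : N 0 = 0) (a : ℕ → ℝ) (n : ℕ) :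
    N (∑ i ∈ Finset.range n, a i) ≤ ∑ i ∈ Finset.range n, 2 ^ (i + 1) * N (a i) := by
  induction n generalizing a with
  | zero => simp [h0]
  | succ n ih =>
    rw [Finset.sum_range_succ', Finset.sum_range_succ']
    calc N (∑ i ∈ Finset.range n, a (i + 1) + a 0)
        ≤ 2 * N (∑ i ∈ Finset.range n, a (i + 1)) + 2 * N (a 0) := hN _ _
      _ ≤ 2 * ∑ i ∈ Finset.range n, 2 ^ (i + 1) * N (a (i + 1)) + 2 * N (a 0) := by
        gcongr; exact ih _
      _ = ∑ i ∈ Finset.range n, 2 ^ (i + 1 + 1) * N (a (i + 1)) + 2 ^ (0 + 1) * N (a 0) := by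
        rw [Finset.mul_sum]; simp only [pow_succ]; ring_nf

lemma apply_natCast_mul_le (hN : QuasiSubadditive N) (h0 : N 0 = 0) (hnn : ∀ t, 0 ≤ N t)
    (n : ℕ) (t : ℝ) : N (n * t) ≤ 4 ^ n * N t := by
  induction n with
  | zero => simpa [h0] using hnn t
  | succ n ih =>
    calc N ((n + 1 : ℕ) * t) = N (n * t + t) := by push_cast; ring_nf
      _ ≤ 2 * N (n * t) + 2 * N t := hN _ _
      _ ≤ 2 * (4 ^ n * N t) + 2 * (4 ^ n * N t) := by
        gcongr; exact le_mul_of_one_le_left (hnn t) (one_le_pow₀ (by norm_num))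
      _ = 4 ^ (n + 1) * N t := by ring

theorem le_of_le_div_four_pow (hN : QuasiSubadditive N) (h0 : N 0 = 0) (hnn : ∀ t, 0 ≤ N t)
    (hcont : ContinuousAt N 0) {b : ℕ} (hb : 2 ≤ b) {u K : ℝ} (hu : 0 < u)
    (hK : ∀ i : ℕ, N (u / b ^ i) ≤ K / 4 ^ i) : ∀ θ ∈ Icc 0 u, N θ ≤ 2 * 4 ^ (b + 1) * K := by
  intro θ hθ
  obtain ⟨d, hdb, happrox⟩ := exists_digits_sub_sum_mem_Icc hb hu hθ
  set g : ℕ → ℝ := fun n => ∑ i ∈ Finset.range (n + 1), d i * (u / b ^ i)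
  have hg (n : ℕ) : N (g n) ≤ 4 ^ (b + 1) * K := calc
    N (g n) ≤ ∑ i ∈ Finset.range (n + 1), 2 ^ (i + 1) * N (d i * (u / b ^ i)) :=
        hN.apply_sum_le h0 _ _
    _ ≤ ∑ i ∈ Finset.range (n + 1), 2 ^ (i + 1) * (4 ^ b * (K / 4 ^ i)) := by
        gcongr with i
        calc N (d i * (u / b ^ i)) ≤ 4 ^ d i * N (u / b ^ i) := hN.apply_natCast_mul_le h0 hnn _ _
          _ ≤ 4 ^ b * (K / 4 ^ i) := by
            gcongr
            · exact hnn _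
            · norm_num
            · exact (hdb i).le
            · exact hK i
    _ = 2 * 4 ^ b * K * ∑ i ∈ Finset.range (n + 1), (1 / 2 : ℝ) ^ i := by
        rw [Finset.mul_sum]
        refine Finset.sum_congr rfl fun i _ => ?_
        rw [pow_succ, show (4 : ℝ) ^ i = 2 ^ i * 2 ^ i by rw [← mul_pow]; norm_num, one_div_pow]
        field_simp
    _ ≤ 2 * 4 ^ b * K * 2 := by
        gcongr
        · simpa using (hnn u).trans (by simpa using hK 0)
        · exact sum_geometric_two_le _
    _ = 4 ^ (b + 1) * K := by ring
  have hrem : Tendsto (fun n => θ - g n) atTop (𝓝 0) := by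
    refine squeeze_zero (fun n => (happrox n).1) (fun n => (happrox n).2) ?_
    simpa [div_eq_mul_inv, ← inv_pow] using
      (tendsto_pow_atTop_nhds_zero_of_lt_one (by positivity)
        (inv_lt_one_of_one_lt₀ (by exact_mod_cast hb))).const_mul u
  have hNrem : Tendsto (fun n => N (θ - g n)) atTop (𝓝 0) := h0 ▸ hcont.tendsto.comp hrem
  have hsplit (n : ℕ) : N θ ≤ 2 * 4 ^ (b + 1) * K + 2 * N (θ - g n) := calc
    N θ = N (g n + (θ - g n)) := by ring_nf
    _ ≤ 2 * N (g n) + 2 * N (θ - g n) := hN _ _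
    _ ≤ 2 * 4 ^ (b + 1) * K + 2 * N (θ - g n) := by linarith [hg n]
  simpa using ge_of_tendsto' ((hNrem.const_mul 2).const_add _) hsplit

end QuasiSubadditive

namespace MeasureTheory

variable {μ : Measure ℝ}

lemma one_sub_re_charFun_eq_integral [IsProbabilityMeasure μ] (t : ℝ) :
    1 - (charFun μ t).re = ∫ x, (1 - Real.cos (t * x)) ∂μ := by
  have hcos : Integrable (fun x => Real.cos (t * x)) μ :=
    (integrable_const 1).mono' (by fun_prop) (ae_of_all _ fun x => Real.abs_cos_le_one _)
  have hre : (charFun μ t).re = ∫ x, Real.cos (t * x) ∂μ := by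
    rw [charFun_apply_real, ← RCLike.re_to_complex, ← integral_re]
    · congr 1 with x
      simp [← Complex.ofReal_mul, Complex.exp_ofReal_mul_I_re]
    · exact (integrable_const 1).mono' (by fun_prop) (ae_of_all _ fun x => by
        simp [← Complex.ofReal_mul, Complex.norm_exp_ofReal_mul_I])
  rw [hre, integral_sub (integrable_const 1) hcos, integral_const]
  simp

lemma one_sub_re_charFun_nonneg [IsProbabilityMeasure μ] (t : ℝ) : 0 ≤ 1 - (charFun μ t).re :=
  sub_nonneg.mpr ((Complex.re_le_norm _).trans (norm_charFun_le_one t))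

lemma one_sub_re_charFun_neg (t : ℝ) : 1 - (charFun μ (-t)).re = 1 - (charFun μ t).re := by
  rw [charFun_neg, Complex.conj_re]

lemma quasiSubadditive_one_sub_re_charFun [IsProbabilityMeasure μ] :
    QuasiSubadditive fun t => 1 - (charFun μ t).re := by
  intro p q
  have hint : ∀ t : ℝ, Integrable (fun x => 1 - Real.cos (t * x)) μ := fun t =>
    (integrable_const 2).mono' (by fun_prop) (ae_of_all _ fun x => by
      rw [Real.norm_eq_abs, abs_le]
      constructor <;> linarith [Real.cos_le_one (t * x), Real.neg_one_le_cos (t * x)])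
  simp only [one_sub_re_charFun_eq_integral]
  rw [← integral_const_mul, ← integral_const_mul, ← integral_add]
  · refine integral_mono (hint _) (((hint p).const_mul 2).add ((hint q).const_mul 2)) fun x => ?_
    simpa only [add_mul] using Real.one_sub_cos_add_le (p * x) (q * x)
  · exact (hint p).const_mul 2
  · exact (hint q).const_mul 2

lemma one_sub_re_charFun_le_of_le_div_four_pow [IsProbabilityMeasure μ] {b : ℕ} (hb : 2 ≤ b)
    {u K : ℝ} (hu : 0 < u) (hK : ∀ i : ℕ, 1 - (charFun μ (u / b ^ i)).re ≤ K / 4 ^ i)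
    {t : ℝ} (ht : |t| ≤ u) :
    1 - (charFun μ t).re ≤ 2 * 4 ^ (b + 1) * K := by
  have hle := (quasiSubadditive_one_sub_re_charFun (μ := μ)).le_of_le_div_four_pow
    (by simp) one_sub_re_charFun_nonneg
    (continuous_const.sub (Complex.continuous_re.comp continuous_charFun)).continuousAt hb hu hK
  rcases le_total 0 t with h | h
  · exact hle t ⟨h, (le_abs_self t).trans ht⟩
  · rw [← one_sub_re_charFun_neg]
    exact hle (-t) ⟨neg_nonneg.mpr h, (neg_le_abs t).trans ht⟩

lemma measureReal_abs_gt_le_of_one_sub_re_charFun_le [IsProbabilityMeasure μ] {r C : ℝ}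
    (hr : 0 < r) (h : ∀ t, |t| ≤ 2 * r⁻¹ → 1 - (charFun μ t).re ≤ C) :
    μ.real {x | r < |x|} ≤ 2 * C := by
  set a := 2 * r⁻¹
  have ha : 0 < a := by positivity
  have hreal : ∫ t in -a..a, (1 - charFun μ t) =
      ((∫ t in -a..a, (1 - (charFun μ t).re) : ℝ) : ℂ) := by
    have hint : IntervalIntegrable (fun t => 1 - charFun μ t) volume (-a) a :=
      intervalIntegrable_const.sub intervalIntegrable_charFun
    apply Complex.ext
    · simpa using (intervalIntegral.intervalIntegral_re hint).symm
    · rw [intervalIntegral.integral_sub intervalIntegrable_const intervalIntegrable_charFun,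
        integral_charFun_Icc ha]
      simp
  have hbound : ‖∫ t in -a..a, (1 - (charFun μ t).re)‖ ≤ C * |a - -a| :=
    intervalIntegral.norm_integral_le_of_norm_le_const fun t ht => by
      rw [Real.norm_of_nonneg (one_sub_re_charFun_nonneg t)]
      refine h t (abs_le.mpr ?_)
      rw [Set.uIoc_of_le (by linarith)] at ht
      exact ⟨ht.1.le, ht.2⟩
  calc μ.real {x | r < |x|} ≤ 2⁻¹ * r * ‖∫ t in -a..a, (1 - charFun μ t)‖ := by
        simpa [a, neg_mul] using measureReal_abs_gt_le_integral_charFun (μ := μ) hr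
    _ ≤ 2⁻¹ * r * (C * |a - -a|) := by
        rw [hreal, Complex.norm_real]; gcongr
    _ = 2 * C := by
        rw [show a - -a = 2 * a by ring, abs_of_pos (by positivity)]
        simp only [a]; field_simp

end MeasureTheory

section SlowVariation

variable {L : ℝ → ℝ}

lemma eventually_le_two_mul_of_tendsto_div {c : ℝ} (hLpos : ∀ x > (0 : ℝ), 0 < L x)
    (hc : Tendsto (fun x => L (c * x) / L x) atTop (𝓝 1)) :
    ∀ᶠ x in atTop, L (c * x) ≤ 2 * L x :=
  ((hc.eventually (gt_mem_nhds one_lt_two)).and (eventually_gt_atTop 0)).mono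
    fun x ⟨h, hx⟩ => ((div_lt_iff₀ (hLpos x hx)).mp h).le

lemma le_two_pow_mul_of_le_two_mul {b X y : ℝ} (hb : 1 ≤ b)
    (hX : ∀ z ≥ X, L (b * z) ≤ 2 * L z) (hy : X ≤ y) (hy0 : 0 ≤ y) (i : ℕ) :
    L (b ^ i * y) ≤ 2 ^ i * L y := by
  induction i with
  | zero => simp
  | succ i ih =>
    calc L (b ^ (i + 1) * y) = L (b * (b ^ i * y)) := by ring_nf
      _ ≤ 2 * L (b ^ i * y) := hX _ (hy.trans (le_mul_of_one_le_left hy0 (one_le_pow₀ hb)))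
      _ ≤ 2 ^ (i + 1) * L y := by rw [pow_succ']; linarith

end SlowVariation

lemma le_div_four_pow_of_le_rpow_mul {N L : ℝ → ℝ} {α c u : ℝ} {b : ℕ} (hb1 : 1 ≤ b)
    (hb : 8 ≤ (b : ℝ) ^ α) (hu : 0 < u) (hu1 : u ≤ 1) (hc : 0 ≤ c) (hLu : 0 ≤ L u⁻¹)
    (hL : ∀ i : ℕ, L (b ^ i * u⁻¹) ≤ 2 ^ i * L u⁻¹)
    (hN : ∀ θ, 0 < θ → θ ≤ 1 → N θ ≤ c * θ ^ α * L θ⁻¹) (i : ℕ) :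
    N (u / b ^ i) ≤ c * u ^ α * L u⁻¹ / 4 ^ i := by
  have hbi : (1 : ℝ) ≤ b ^ i := one_le_pow₀ (by exact_mod_cast hb1)
  have hbα : (0 : ℝ) < (b : ℝ) ^ α := by linarith
  calc N (u / b ^ i) ≤ c * (u / b ^ i) ^ α * L (u / b ^ i)⁻¹ :=
        hN _ (by positivity) (div_le_one_of_le₀ (hu1.trans hbi) (by positivity))
    _ ≤ c * (u ^ α / ((b : ℝ) ^ α) ^ i) * (2 ^ i * L u⁻¹) := by
        rw [Real.div_rpow hu.le (by positivity), Real.rpow_pow_comm (Nat.cast_nonneg b), inv_div,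
          div_eq_mul_inv]
        gcongr
        exact hL i
    _ = c * u ^ α * L u⁻¹ * (2 / (b : ℝ) ^ α) ^ i := by rw [div_pow]; ring
    _ ≤ c * u ^ α * L u⁻¹ * (1 / 4) ^ i := by
        refine mul_le_mul_of_nonneg_left (pow_le_pow_left₀ (by positivity) ?_ i)
          (mul_nonneg (mul_nonneg hc (by positivity)) hLu)
        rw [div_le_iff₀ hbα]
        linarith
    _ = c * u ^ α * L u⁻¹ / 4 ^ i := by rw [one_div_pow]; ring

theorem measureReal_abs_gt_le_of_one_sub_re_charFun_le_rpow_mul {μ : Measure ℝ}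
    [IsProbabilityMeasure μ] {L : ℝ → ℝ} {α c X x : ℝ} {b : ℕ} (hb : 2 ≤ b)
    (hbα : 8 ≤ (b : ℝ) ^ α) (hc : 0 ≤ c) (hX : ∀ z ≥ X, L (b * z) ≤ 2 * L z) (hx : 2 ≤ x)
    (hxX : X ≤ 2⁻¹ * x) (hLx : 0 ≤ L (2⁻¹ * x))
    (hN : ∀ θ, 0 < θ → θ ≤ 1 → 1 - (charFun μ θ).re ≤ c * θ ^ α * L θ⁻¹) :
    μ.real {y | x < |y|} ≤ 4 ^ (b + 2) * c * (2 * x⁻¹) ^ α * L (2⁻¹ * x) := by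
  have hx0 : 0 < x := by linarith
  have hinv : (2 * x⁻¹)⁻¹ = 2⁻¹ * x := by rw [mul_inv, inv_inv]
  have hK := le_div_four_pow_of_le_rpow_mul (by omega) hbα (by positivity)
    (by rw [mul_inv_le_iff₀ hx0]; linarith) hc (hinv ▸ hLx)
    (hinv ▸ le_two_pow_mul_of_le_two_mul (by exact_mod_cast (by omega : 1 ≤ b)) hX hxX
      (by positivity)) hN
  calc μ.real {y | x < |y|} ≤ 2 * (2 * 4 ^ (b + 1) * (c * (2 * x⁻¹) ^ α * L (2 * x⁻¹)⁻¹)) :=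
        measureReal_abs_gt_le_of_one_sub_re_charFun_le hx0 fun t ht =>
          one_sub_re_charFun_le_of_le_div_four_pow hb (by positivity) hK ht
    _ = 4 ^ (b + 2) * c * (2 * x⁻¹) ^ α * L (2⁻¹ * x) := by rw [hinv]; ring

theorem stmt_2_general (α : ℝ) (hα : 0 < α)
    (L : ℝ → ℝ) (hLpos : ∀ x > (0:ℝ), 0 < L x)
    (hLsv : ∀ c > (0:ℝ), Tendsto (fun x => L (c * x) / L x) atTop (nhds 1))
    (ψ : ℝ → ℂ)
    (hre : ∀ θ : ℝ, (ψ θ).re ≤ 0)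
    (c₁ : ℝ) (hc₁ : 0 < c₁)
    (hbound : ∀ θ : ℝ, 0 < |θ| → |θ| ≤ 1 → ‖ψ θ‖ ≤ c₁ * |θ| ^ α * L (|θ|⁻¹))
    (μ : ℝ → Measure ℝ) (hprob : ∀ s > (0:ℝ), IsProbabilityMeasure (μ s))
    (hchar : ∀ s > (0:ℝ), ∀ θ : ℝ,
      ∫ x, Complex.exp (Complex.I * θ * x) ∂(μ s) = Complex.exp ((s : ℂ) * ψ θ)) :
    ∃ c₀ > (0:ℝ), ∃ x₀ > (0:ℝ), ∀ s > (0:ℝ), ∀ x > x₀,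
      (μ s {y : ℝ | x < |y|}).toReal ≤ c₀ * s * x ^ (-α) * L x := by
  obtain ⟨b, hb2, hb8⟩ : ∃ b : ℕ, 2 ≤ b ∧ 8 ≤ (b : ℝ) ^ α :=
    ((eventually_ge_atTop 2).and (((tendsto_rpow_atTop hα).comp
      tendsto_natCast_atTop_atTop).eventually (eventually_ge_atTop 8))).exists
  obtain ⟨X, hX⟩ : ∃ X, ∀ y ≥ X, L (b * y) ≤ 2 * L y ∧ L (2⁻¹ * y) ≤ 2 * L y :=
    eventually_atTop.mp ((eventually_le_two_mul_of_tendsto_div hLpos (hLsv b (by positivity))).and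
      (eventually_le_two_mul_of_tendsto_div hLpos (hLsv 2⁻¹ (by norm_num))))
  refine ⟨4 ^ (b + 3) * 2 ^ α * c₁, by positivity, max (2 * X) 2, by positivity,
    fun s hs x hx => ?_⟩
  have := hprob s hs
  obtain ⟨hxX, hx2⟩ := max_lt_iff.mp hx
  have hx0 : 0 < x := by linarith
  have hN (θ : ℝ) (h0 : 0 < θ) (h1 : θ ≤ 1) :
      1 - (charFun (μ s) θ).re ≤ 2 * s * c₁ * θ ^ α * L θ⁻¹ := by
    have hφ : charFun (μ s) θ = Complex.exp (s * ψ θ) := by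
      rw [charFun_apply_real, ← hchar s hs θ]
      simp only [mul_comm Complex.I, mul_right_comm]
    have hψ := hbound θ (by positivity) (by rwa [abs_of_pos h0])
    rw [abs_of_pos h0] at hψ
    calc 1 - (charFun (μ s) θ).re ≤ 2 * ‖(s : ℂ) * ψ θ‖ := hφ ▸ Complex.one_sub_re_exp_le
          (by simpa using mul_nonpos_of_nonneg_of_nonpos hs.le (hre θ))
      _ ≤ 2 * s * c₁ * θ ^ α * L θ⁻¹ := by
          rw [norm_mul, Complex.norm_real, Real.norm_of_nonneg hs.le]; nlinarith
  have hLx : L (2⁻¹ * x) ≤ 2 * L x := (hX x (by linarith)).2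
  have hxα : (2 * x⁻¹) ^ α = 2 ^ α * x ^ (-α) := by
    rw [Real.mul_rpow (by norm_num) (by positivity), Real.inv_rpow hx0.le,
      Real.rpow_neg hx0.le]
  calc (μ s {y : ℝ | x < |y|}).toReal
      ≤ 4 ^ (b + 2) * (2 * s * c₁) * (2 * x⁻¹) ^ α * L (2⁻¹ * x) :=
        measureReal_abs_gt_le_of_one_sub_re_charFun_le_rpow_mul hb2 hb8 (by positivity)
          (fun z hz => (hX z hz).1) hx2.le (by linarith) (hLpos _ (by positivity)).le hN
    _ ≤ 4 ^ (b + 3) * 2 ^ α * c₁ * s * x ^ (-α) * L x := by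
        have hpos : 0 ≤ 4 ^ b * 2 ^ α * c₁ * s * x ^ (-α) := by positivity
        rw [hxα, pow_add, pow_add]
        nlinarith

theorem stmt_2 (α : ℝ) (hα : 0 < α) (hα2 : α < 2)
    (L : ℝ → ℝ) (hLpos : ∀ x > (0:ℝ), 0 < L x)
    (hLsv : ∀ c > (0:ℝ), Tendsto (fun x => L (c * x) / L x) atTop (nhds 1))
    (ψ : ℝ → ℂ)
    (hconj : ∀ θ : ℝ, ψ (-θ) = starRingEnd ℂ (ψ θ))
    (hre : ∀ θ : ℝ, (ψ θ).re ≤ 0)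
    (c₁ : ℝ) (hc₁ : 0 < c₁)
    (hbound : ∀ θ : ℝ, 0 < |θ| → |θ| ≤ 1 → ‖ψ θ‖ ≤ c₁ * |θ| ^ α * L (|θ|⁻¹))
    (μ : ℝ → Measure ℝ) (hprob : ∀ s > (0:ℝ), IsProbabilityMeasure (μ s))
    (hchar : ∀ s > (0:ℝ), ∀ θ : ℝ,
      ∫ x, Complex.exp (Complex.I * θ * x) ∂(μ s) = Complex.exp ((s : ℂ) * ψ θ)) :
    ∃ c₀ > (0:ℝ), ∃ x₀ > (0:ℝ), ∀ s > (0:ℝ), ∀ x > x₀,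
      (μ s {y : ℝ | x < |y|}).toReal ≤ c₀ * s * x ^ (-α) * L x :=
  stmt_2_general α hα L hLpos hLsv ψ hre c₁ hc₁ hbound μ hprob hchar
end

section
/- Let c₁, c₂ ≥ 0 with c₁ + c₂ > 0, let a ∈ ℝ, and define ψ : ℝ → ℂ by ψ(θ) = −(π/2)(c₁+c₂)θ − i(c₁−c₂)θ log θ + i a (c₁−c₂)θ for θ > 0, ψ(0) = 0, and ψ(−θ) = conjugate of ψ(θ) for θ > 0. Suppose that for each s > 0, μ_s is a Borel probability measure on ℝ whose characteristic function equals θ ↦ exp(s ψ(θ)). Then there exists a constant c > 0 (depending only on c₁, c₂, a) such that for all s > 0 and all x > 0, μ_s({ y ∈ ℝ : |y| > x }) ≤ c ( s x^{-1} + s² x^{-2} + s² x^{-2} (log x)² ). -/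
/-!
Write `φ` for the characteristic function of `μ_s` and `u = 2 / x`. The truncation inequality
bounds `μ_s {|y| > x}` by `(x / 2) ‖∫_{-u}^{u} (1 - φ)‖`, and since `φ(-t) = conj φ(t)` this
integral only sees `1 - Re φ`, so it is at most `2 u` times the supremum of `1 - Re φ` on `(0, u]`.
For `Re z ≤ 0` we have `1 - Re e^z ≤ -Re z + (Im z)² / 2`. Here `z = s ψ(θ)`, with
`Re z = -s (π/2)(c₁ + c₂) θ` (first order in `s`) and `Im z = s (c₁ - c₂) θ (a - log θ)`.
The bound `θ log (u / θ) ≤ u` controls `(Im z)²` by `s² u² (1 + (a - log u)²)`, and this is where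
the `s² x⁻² log² x` term comes from.
-/

open MeasureTheory Real

lemma MeasureTheory.re_charFun_abs (μ : Measure ℝ) (t : ℝ) :
    (charFun μ |t|).re = (charFun μ t).re := by
  rcases abs_choice t with h | h <;> simp [h, charFun_neg]

lemma MeasureTheory.intervalIntegral_one_sub_charFun_symm (μ : Measure ℝ) [IsFiniteMeasure μ]
    (u : ℝ) :
    ∫ t in -u..u, 1 - charFun μ t = ((∫ t in -u..u, (1 - (charFun μ t).re) : ℝ) : ℂ) := by
  have hcont : Continuous (charFun μ) := continuous_charFun
  have hflip : ∫ t in -u..u, 1 - charFun μ (-t) = ∫ t in -u..u, 1 - charFun μ t := by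
    simpa using intervalIntegral.integral_comp_neg (a := -u) (b := u) (fun t ↦ 1 - charFun μ t)
  have hpair (t : ℝ) :
      (1 - charFun μ t) + (1 - charFun μ (-t)) = ((2 * (1 - (charFun μ t).re) : ℝ) : ℂ) := by
    rw [charFun_neg]
    apply Complex.ext <;> simp
    ring
  calc ∫ t in -u..u, 1 - charFun μ t
      = 2⁻¹ * ∫ t in -u..u, (1 - charFun μ t) + (1 - charFun μ (-t)) := by
        rw [intervalIntegral.integral_add ((by fun_prop : Continuous _).intervalIntegrable _ _)
          ((by fun_prop : Continuous _).intervalIntegrable _ _), hflip]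
        ring
    _ = ((∫ t in -u..u, (1 - (charFun μ t).re) : ℝ) : ℂ) := by
        simp_rw [hpair, intervalIntegral.integral_ofReal, intervalIntegral.integral_const_mul]
        push_cast
        ring

lemma MeasureTheory.measureReal_abs_gt_le_of_one_sub_re_charFun_le_s14 {μ : Measure ℝ}
    [IsProbabilityMeasure μ] {r M : ℝ} (hr : 0 < r)
    (hM : ∀ t ∈ Set.Ioc 0 (2 * r⁻¹), 1 - (charFun μ t).re ≤ M) :
    μ.real {x | r < |x|} ≤ 2 * M := by
  set u := 2 * r⁻¹
  have hu : 0 < u := by positivity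
  have hnonneg (t : ℝ) : 0 ≤ 1 - (charFun μ t).re :=
    sub_nonneg.2 ((Complex.re_le_norm _).trans (norm_charFun_le_one t))
  have hbound : ∀ t ∈ Set.Icc (-u) u, 1 - (charFun μ t).re ≤ M := by
    intro t ht
    rcases eq_or_ne t 0 with rfl | ht0
    · simpa [charFun_zero] using (hnonneg u).trans (hM u ⟨hu, le_rfl⟩)
    · rw [← re_charFun_abs]
      exact hM _ ⟨abs_pos.2 ht0, abs_le.2 ht⟩
  calc μ.real {x | r < |x|}
      ≤ 2⁻¹ * r * ‖∫ t in (-2 * r⁻¹)..(2 * r⁻¹), 1 - charFun μ t‖ :=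
        measureReal_abs_gt_le_integral_charFun hr
    _ = 2⁻¹ * r * ∫ t in -u..u, (1 - (charFun μ t).re) := by
        rw [neg_mul, intervalIntegral_one_sub_charFun_symm, Complex.norm_real,
          Real.norm_of_nonneg (intervalIntegral.integral_nonneg (by linarith) fun t _ ↦ hnonneg t)]
    _ ≤ 2⁻¹ * r * ∫ _ in -u..u, M := by
        gcongr
        refine intervalIntegral.integral_mono_on (by linarith) ?_ (by simp) hbound
        exact (continuous_const.sub (Complex.continuous_re.comp continuous_charFun)).intervalIntegrable
          _ _
    _ = 2 * M := by
        simp only [intervalIntegral.integral_const, smul_eq_mul, u]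
        field_simp
        ring

lemma Complex.one_sub_re_exp_le_s14 {z : ℂ} (hz : z.re ≤ 0) :
    1 - (Complex.exp z).re ≤ -z.re + z.im ^ 2 / 2 := by
  have h1 : 1 - Real.exp z.re ≤ -z.re := by linarith [Real.add_one_le_exp z.re]
  have h2 : 1 - Real.cos z.im ≤ z.im ^ 2 / 2 := by
    linarith [Real.one_sub_sq_div_two_le_cos (x := z.im)]
  have h3 : Real.exp z.re ≤ 1 := Real.exp_le_one_iff.2 hz
  rw [Complex.exp_re]
  nlinarith [Real.exp_pos z.re, Real.cos_le_one z.im]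

lemma Real.mul_log_div_le {θ u : ℝ} (hθ : 0 < θ) (hu : 0 < u) : θ * Real.log (u / θ) ≤ u := by
  have := Real.log_le_sub_one_of_pos (div_pos hu hθ)
  calc θ * Real.log (u / θ) ≤ θ * (u / θ - 1) := by gcongr
    _ = u - θ := by field_simp
    _ ≤ u := by linarith

lemma Real.sq_mul_sub_log_sq_le {a θ u : ℝ} (hθ : 0 < θ) (hθu : θ ≤ u) :
    θ ^ 2 * (a - Real.log θ) ^ 2 ≤ 2 * u ^ 2 * (1 + (a - Real.log u) ^ 2) := by
  have hu : 0 < u := hθ.trans_le hθu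
  have hlog : 0 ≤ θ * Real.log (u / θ) :=
    mul_nonneg hθ.le (Real.log_nonneg ((one_le_div hθ).2 hθu))
  have h1 : (θ * Real.log (u / θ)) ^ 2 ≤ u ^ 2 := pow_le_pow_left₀ hlog (mul_log_div_le hθ hu) 2
  have h2 : (θ * (a - Real.log u)) ^ 2 ≤ (u * (a - Real.log u)) ^ 2 := by
    rw [mul_pow, mul_pow]; gcongr
  calc θ ^ 2 * (a - Real.log θ) ^ 2 = (θ * (a - Real.log u) + θ * Real.log (u / θ)) ^ 2 := by
        rw [Real.log_div hu.ne' hθ.ne']; ring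
    _ ≤ 2 * ((θ * (a - Real.log u)) ^ 2 + (θ * Real.log (u / θ)) ^ 2) := add_sq_le
    _ ≤ 2 * u ^ 2 * (1 + (a - Real.log u) ^ 2) := by nlinarith

noncomputable def stableExponent (c₁ c₂ a θ : ℝ) : ℂ :=
  ((-(π / 2) * (c₁ + c₂) * θ : ℝ) : ℂ)
    - Complex.I * (((c₁ - c₂) * θ * Real.log θ : ℝ) : ℂ)
    + Complex.I * ((a * (c₁ - c₂) * θ : ℝ) : ℂ)

lemma one_sub_re_exp_stableExponent_le {c₁ c₂ a s θ u : ℝ} (hc : 0 ≤ c₁ + c₂) (hs : 0 ≤ s)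
    (hθ : 0 < θ) (hθu : θ ≤ u) :
    1 - (Complex.exp (s * stableExponent c₁ c₂ a θ)).re
      ≤ s * (π / 2 * (c₁ + c₂)) * u
          + s ^ 2 * (c₁ - c₂) ^ 2 * u ^ 2 * (1 + (a - Real.log u) ^ 2) := by
  set z : ℂ := s * stableExponent c₁ c₂ a θ
  have hre : z.re = -(s * (π / 2 * (c₁ + c₂)) * θ) := by simp [z, stableExponent]; ring
  have him : z.im = s * (c₁ - c₂) * (θ * (a - Real.log θ)) := by
    simp [z, stableExponent]; ring
  have hdrift : s * (π / 2 * (c₁ + c₂)) * θ ≤ s * (π / 2 * (c₁ + c₂)) * u := by gcongr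
  have hosc : z.im ^ 2 / 2 ≤ s ^ 2 * (c₁ - c₂) ^ 2 * u ^ 2 * (1 + (a - Real.log u) ^ 2) := by
    rw [him, mul_pow, mul_pow, mul_pow]
    have := Real.sq_mul_sub_log_sq_le (a := a) hθ hθu
    have : 0 ≤ s ^ 2 * (c₁ - c₂) ^ 2 := by positivity
    nlinarith
  have := Complex.one_sub_re_exp_le_s14 (z := z) (by rw [hre, neg_nonpos]; positivity)
  linarith

lemma truncation_bound_le_rate {K₁ K₂ a s x : ℝ} (hK₁ : 0 ≤ K₁) (hK₂ : 0 ≤ K₂) (hs : 0 ≤ s)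
    (hx : 0 < x) :
    2 * (s * K₁ * (2 * x⁻¹) + s ^ 2 * K₂ * (2 * x⁻¹) ^ 2 * (1 + (a - Real.log (2 * x⁻¹)) ^ 2))
      ≤ (4 * K₁ + 16 * K₂ * (1 + (a - Real.log 2) ^ 2)) *
        (s * x⁻¹ + s ^ 2 * x ^ (-(2:ℝ)) + s ^ 2 * x ^ (-(2:ℝ)) * Real.log x ^ 2) := by
  rw [Real.rpow_neg_ofNat, zpow_neg, zpow_ofNat, Real.log_mul two_ne_zero (inv_ne_zero hx.ne'),
    Real.log_inv]
  set L := Real.log x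
  set p := s * x⁻¹
  set q := s ^ 2 * (x ^ 2)⁻¹
  set w := (a - Real.log 2) ^ 2
  have hp : 0 ≤ p := by positivity
  have hq : 0 ≤ q := by positivity
  have hw : 0 ≤ w := sq_nonneg _
  have hsq : (a - Real.log 2 + L) ^ 2 ≤ 2 * (w + L ^ 2) := add_sq_le
  have hosc := mul_le_mul_of_nonneg_left hsq (mul_nonneg hK₂ hq)
  calc _ = 4 * K₁ * p + 8 * K₂ * q * (1 + (a - Real.log 2 + L) ^ 2) := by ring
    _ ≤ _ := by
      linarith [mul_nonneg (mul_nonneg hK₂ hp) (add_nonneg zero_le_one hw), mul_nonneg hK₂ hq,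
        mul_nonneg (mul_nonneg (mul_nonneg hK₂ hq) hw) (sq_nonneg L), mul_nonneg hK₁ hq,
        mul_nonneg (mul_nonneg hK₁ hq) (sq_nonneg L)]

theorem stmt_14_general (c₁ c₂ a : ℝ) (hsum : 0 < c₁ + c₂)
    (ψ : ℝ → ℂ)
    (hψpos : ∀ θ > (0:ℝ), ψ θ =
      ((-(π / 2) * (c₁ + c₂) * θ : ℝ) : ℂ)
        - Complex.I * (((c₁ - c₂) * θ * Real.log θ : ℝ) : ℂ)
        + Complex.I * ((a * (c₁ - c₂) * θ : ℝ) : ℂ))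
    (μ : ℝ → Measure ℝ) (hprob : ∀ s > (0:ℝ), IsProbabilityMeasure (μ s))
    (hchar : ∀ s > (0:ℝ), ∀ θ : ℝ,
      ∫ x, Complex.exp (Complex.I * θ * x) ∂(μ s) = Complex.exp ((s : ℂ) * ψ θ)) :
    ∃ c > (0:ℝ), ∀ s > (0:ℝ), ∀ x > (0:ℝ),
      (μ s {y : ℝ | x < |y|}).toReal ≤
        c * (s * x⁻¹ + s ^ 2 * x ^ (-(2:ℝ)) + s ^ 2 * x ^ (-(2:ℝ)) * (Real.log x) ^ 2) := by
  have hK₁ : 0 < π / 2 * (c₁ + c₂) := mul_pos (by positivity) hsum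
  refine ⟨4 * (π / 2 * (c₁ + c₂)) + 16 * (c₁ - c₂) ^ 2 * (1 + (a - Real.log 2) ^ 2),
    by positivity, fun s hs x hx ↦ ?_⟩
  have := hprob s hs
  have hcharFun (θ : ℝ) : charFun (μ s) θ = Complex.exp (s * ψ θ) := by
    rw [charFun_apply_real, ← hchar s hs θ]
    simp only [mul_comm, mul_left_comm]
  calc (μ s {y : ℝ | x < |y|}).toReal
      ≤ 2 * (s * (π / 2 * (c₁ + c₂)) * (2 * x⁻¹)
          + s ^ 2 * (c₁ - c₂) ^ 2 * (2 * x⁻¹) ^ 2 * (1 + (a - Real.log (2 * x⁻¹)) ^ 2)) := by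
        refine measureReal_abs_gt_le_of_one_sub_re_charFun_le_s14 hx fun θ hθ ↦ ?_
        rw [hcharFun, hψpos θ hθ.1]
        exact one_sub_re_exp_stableExponent_le hsum.le hs.le hθ.1 hθ.2
    _ ≤ _ := truncation_bound_le_rate hK₁.le (sq_nonneg _) hs.le hx

theorem stmt_14 (c₁ c₂ a : ℝ) (hc₁ : 0 ≤ c₁) (hc₂ : 0 ≤ c₂) (hsum : 0 < c₁ + c₂)
    (ψ : ℝ → ℂ)
    (hψpos : ∀ θ > (0:ℝ), ψ θ =
      ((-(π / 2) * (c₁ + c₂) * θ : ℝ) : ℂ)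
        - Complex.I * (((c₁ - c₂) * θ * Real.log θ : ℝ) : ℂ)
        + Complex.I * ((a * (c₁ - c₂) * θ : ℝ) : ℂ))
    (hψ0 : ψ 0 = 0)
    (hψneg : ∀ θ > (0:ℝ), ψ (-θ) = starRingEnd ℂ (ψ θ))
    (μ : ℝ → Measure ℝ) (hprob : ∀ s > (0:ℝ), IsProbabilityMeasure (μ s))
    (hchar : ∀ s > (0:ℝ), ∀ θ : ℝ,
      ∫ x, Complex.exp (Complex.I * θ * x) ∂(μ s) = Complex.exp ((s : ℂ) * ψ θ)) :
    ∃ c > (0:ℝ), ∀ s > (0:ℝ), ∀ x > (0:ℝ),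
      (μ s {y : ℝ | x < |y|}).toReal ≤
        c * (s * x⁻¹ + s ^ 2 * x ^ (-(2:ℝ)) + s ^ 2 * x ^ (-(2:ℝ)) * (Real.log x) ^ 2) :=
  stmt_14_general c₁ c₂ a hsum ψ hψpos μ hprob hchar
end
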